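/- The subgroup K = {(a, b√3; c√3, d) ∈ G : c ≡ 0 (mod 3)} has index 3 in G. (This is the index |G₃ : G₃ ∩ G₃^{M_3}| for the degree-3 modular equation in signature 3.) -/

import Mathlib

/-!
On `G` the residue `c / d (mod 3)` of `(a, b√3; c√3, d)` is a homomorphism onto `ℤ/3` whose
kernel is `K`; so `K` is even normal in `G`, of index 3.
-/

/-- The subgroup of `SL(2, ℝ)` of matrices of the form `(a, b√3; c√3, d)` with
`a, b, c, d ∈ ℤ`, `ad − 3bc = 1` and `m ∣ c`. -/
def sqrt3Group (m : ℤ) : Subgroup (Matrix.SpecialLinearGroup (Fin 2) ℝ) where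
  carrier := {A | ∃ a b c d : ℤ, (A : Matrix (Fin 2) (Fin 2) ℝ) =
      !![(a:ℝ), (b:ℝ) * Real.sqrt 3; (c:ℝ) * Real.sqrt 3, (d:ℝ)] ∧
      a * d - 3 * b * c = 1 ∧ m ∣ c}
  one_mem' := by
    refine ⟨1, 0, 0, 1, ?_, by ring, dvd_zero m⟩
    rw [Matrix.SpecialLinearGroup.coe_one, Matrix.one_fin_two]
    norm_num
  mul_mem' := by
    rintro A B ⟨a₁, b₁, c₁, d₁, hA, hdA, hcA⟩ ⟨a₂, b₂, c₂, d₂, hB, hdB, hcB⟩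
    have h3 : Real.sqrt 3 * Real.sqrt 3 = 3 := Real.mul_self_sqrt (by norm_num)
    refine ⟨a₁ * a₂ + 3 * b₁ * c₂, a₁ * b₂ + b₁ * d₂, c₁ * a₂ + d₁ * c₂,
      3 * c₁ * b₂ + d₁ * d₂, ?_, ?_, ?_⟩
    · rw [Matrix.SpecialLinearGroup.coe_mul, hA, hB, Matrix.mul_fin_two]
      ext i j
      fin_cases i <;> fin_cases j <;> push_cast <;> simp
      · linear_combination ((b₁ : ℝ) * (c₂ : ℝ)) * h3
      · ring
      · ring
      · linear_combination ((c₁ : ℝ) * (b₂ : ℝ)) * h3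
    · linear_combination (a₂ * d₂ - 3 * b₂ * c₂) * hdA + hdB
    · exact dvd_add (hcA.mul_right _) (hcB.mul_left _)
  inv_mem' := by
    rintro A ⟨a, b, c, d, hA, hdA, hcA⟩
    refine ⟨d, -b, -c, a, ?_, by linear_combination hdA, dvd_neg.mpr hcA⟩
    rw [Matrix.SpecialLinearGroup.coe_inv, hA, Matrix.adjugate_fin_two]
    ext i j
    fin_cases i <;> fin_cases j <;> push_cast <;> simp

open scoped MatrixGroups

noncomputable section

def sqrt3Matrix (a b c d : ℤ) : Matrix (Fin 2) (Fin 2) ℝ :=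
  !![(a : ℝ), (b : ℝ) * Real.sqrt 3; (c : ℝ) * Real.sqrt 3, (d : ℝ)]

theorem mem_sqrt3Group {m : ℤ} {A : SL(2, ℝ)} :
    A ∈ sqrt3Group m ↔ ∃ a b c d : ℤ, (A : Matrix (Fin 2) (Fin 2) ℝ) = sqrt3Matrix a b c d ∧
      a * d - 3 * b * c = 1 ∧ m ∣ c :=
  Iff.rfl

theorem sqrt3Matrix_injective {a b c d a' b' c' d' : ℤ}
    (h : sqrt3Matrix a b c d = sqrt3Matrix a' b' c' d') :
    a = a' ∧ b = b' ∧ c = c' ∧ d = d' := by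
  have h3 : Real.sqrt 3 ≠ 0 := by positivity
  have h00 := congrFun (congrFun h 0) 0
  have h01 := congrFun (congrFun h 0) 1
  have h10 := congrFun (congrFun h 1) 0
  have h11 := congrFun (congrFun h 1) 1
  simp only [sqrt3Matrix, Matrix.of_apply, Matrix.cons_val', Matrix.cons_val_zero,
    Matrix.cons_val_one, Matrix.empty_val', Matrix.cons_val_fin_one, mul_left_inj' h3,
    Int.cast_inj] at h00 h01 h10 h11
  exact ⟨h00, h01, h10, h11⟩

theorem sqrt3Matrix_mul (a₁ b₁ c₁ d₁ a₂ b₂ c₂ d₂ : ℤ) :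
    sqrt3Matrix a₁ b₁ c₁ d₁ * sqrt3Matrix a₂ b₂ c₂ d₂ =
      sqrt3Matrix (a₁ * a₂ + 3 * b₁ * c₂) (a₁ * b₂ + b₁ * d₂) (c₁ * a₂ + d₁ * c₂)
        (3 * c₁ * b₂ + d₁ * d₂) := by
  have h3 : Real.sqrt 3 * Real.sqrt 3 = 3 := Real.mul_self_sqrt (by norm_num)
  ext i j
  fin_cases i <;> fin_cases j <;> simp [sqrt3Matrix]
  · linear_combination ((b₁ : ℝ) * c₂) * h3
  · ring
  · ring
  · linear_combination ((c₁ : ℝ) * b₂) * h3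

theorem mem_sqrt3Group_iff_dvd {A : SL(2, ℝ)} {a b c d : ℤ} (m : ℤ)
    (hA : (A : Matrix (Fin 2) (Fin 2) ℝ) = sqrt3Matrix a b c d) (hdet : a * d - 3 * b * c = 1) :
    A ∈ sqrt3Group m ↔ m ∣ c := by
  constructor
  · rintro ⟨a', b', c', d', hA', -, hm⟩
    obtain ⟨-, -, rfl, -⟩ := sqrt3Matrix_injective (hA.symm.trans hA')
    exact hm
  · exact fun hm ↦ ⟨a, b, c, d, hA, hdet, hm⟩

/-- Equals `c * d ≡ c / d (mod 3)` for `A = (a, b√3; c√3, d)` in `sqrt3Group 1`. -/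
def sqrt3Residue (A : SL(2, ℝ)) : ZMod 3 :=
  (round ((A : Matrix (Fin 2) (Fin 2) ℝ) 1 0 / Real.sqrt 3) : ZMod 3) *
    (round ((A : Matrix (Fin 2) (Fin 2) ℝ) 1 1) : ZMod 3)

theorem sqrt3Residue_eq {A : SL(2, ℝ)} {a b c d : ℤ}
    (hA : (A : Matrix (Fin 2) (Fin 2) ℝ) = sqrt3Matrix a b c d) :
    sqrt3Residue A = c * d := by
  simp [sqrt3Residue, hA, sqrt3Matrix]

theorem intCast_mul_eq_one_of_det_eq_one {a b c d : ℤ} (h : a * d - 3 * b * c = 1) :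
    (a * d : ZMod 3) = 1 := by
  have h3 : (3 : ZMod 3) = 0 := rfl
  simpa [h3] using congrArg (Int.cast : ℤ → ZMod 3) h

/-- The bottom row of a product is `(c₁ a₂ + d₁ c₂, d₁ d₂) (mod 3)`, so the residue is additive
because `a₂ d₂ ≡ 1` and `d₁² ≡ 1 (mod 3)`. -/
def sqrt3ResidueHom : sqrt3Group 1 →* Multiplicative (ZMod 3) where
  toFun A := .ofAdd (sqrt3Residue A)
  map_one' := by
    rw [← ofAdd_zero, Multiplicative.ofAdd.injective.eq_iff]
    simpa using sqrt3Residue_eq (A := 1) (a := 1) (b := 0) (c := 0) (d := 1)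
      (by simp [sqrt3Matrix, Matrix.one_fin_two])
  map_mul' := by
    rintro ⟨A, hAG⟩ ⟨B, hBG⟩
    obtain ⟨a₁, b₁, c₁, d₁, hA, hdetA, -⟩ := mem_sqrt3Group.mp hAG
    obtain ⟨a₂, b₂, c₂, d₂, hB, hdetB, -⟩ := mem_sqrt3Group.mp hBG
    have hAB : ((A * B : SL(2, ℝ)) : Matrix (Fin 2) (Fin 2) ℝ) =
        sqrt3Matrix (a₁ * a₂ + 3 * b₁ * c₂) (a₁ * b₂ + b₁ * d₂) (c₁ * a₂ + d₁ * c₂)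
          (3 * c₁ * b₂ + d₁ * d₂) := by
      rw [Matrix.SpecialLinearGroup.coe_mul, hA, hB, sqrt3Matrix_mul]
    rw [← ofAdd_add, Multiplicative.ofAdd.injective.eq_iff]
    simp only [Subgroup.coe_mul, sqrt3Residue_eq hA, sqrt3Residue_eq hB, sqrt3Residue_eq hAB]
    have h₁ := intCast_mul_eq_one_of_det_eq_one hdetA
    have h₂ := intCast_mul_eq_one_of_det_eq_one hdetB
    have hd₁ : (d₁ : ZMod 3) ^ 2 = 1 :=
      ZMod.pow_card_sub_one_eq_one (right_ne_zero_of_mul_eq_one h₁)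
    have h3 : (3 : ZMod 3) = 0 := rfl
    push_cast
    linear_combination (c₁ * d₁ : ZMod 3) * h₂ + (c₂ * d₂ : ZMod 3) * hd₁ +
      (c₁ * b₂ * (c₁ * a₂ + d₁ * c₂) : ZMod 3) * h3

theorem sqrt3ResidueHom_ker :
    sqrt3ResidueHom.ker = (sqrt3Group 3).subgroupOf (sqrt3Group 1) := by
  ext ⟨A, hAG⟩
  obtain ⟨a, b, c, d, hA, hdet, -⟩ := mem_sqrt3Group.mp hAG
  have had := intCast_mul_eq_one_of_det_eq_one hdet
  have hd : IsUnit (d : ZMod 3) := IsUnit.of_mul_eq_one_right _ had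
  rw [MonoidHom.mem_ker, Subgroup.mem_subgroupOf, mem_sqrt3Group_iff_dvd 3 hA hdet]
  change Multiplicative.ofAdd (sqrt3Residue A) = 1 ↔ _
  rw [ofAdd_eq_one, sqrt3Residue_eq hA, hd.mul_left_eq_zero]
  exact ZMod.intCast_zmod_eq_zero_iff_dvd c 3

def sqrt3LowerUnipotent (c : ℤ) : SL(2, ℝ) :=
  ⟨sqrt3Matrix 1 0 c 1, by simp [sqrt3Matrix, Matrix.det_fin_two_of]⟩

theorem sqrt3LowerUnipotent_mem (c : ℤ) : sqrt3LowerUnipotent c ∈ sqrt3Group 1 :=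
  ⟨1, 0, c, 1, rfl, by ring, one_dvd c⟩

theorem sqrt3ResidueHom_surjective : Function.Surjective sqrt3ResidueHom := by
  intro x
  refine ⟨⟨sqrt3LowerUnipotent (x.toAdd.cast : ℤ), sqrt3LowerUnipotent_mem _⟩, ?_⟩
  change Multiplicative.ofAdd (sqrt3Residue (sqrt3LowerUnipotent _)) = x
  rw [sqrt3Residue_eq (b := 0) (a := 1) rfl]
  simp

end

theorem index_K_in_G3_M3_eq_three :
    ((sqrt3Group 3).relIndex (sqrt3Group 1)) = 3 := by
  rw [Subgroup.relIndex, ← sqrt3ResidueHom_ker, Subgroup.index_ker,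
    MonoidHom.range_eq_top_of_surjective _ sqrt3ResidueHom_surjective, Subgroup.card_top,
    Nat.card_eq_fintype_card, Fintype.card_multiplicative, ZMod.card]
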